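/- Consider the extended CFI block ω_k, containing vertices for all 2^k k-bit binary strings (colored c_e if even weight and c_o if odd weight), plus bit-pair vertices a_i, b_i as in χ_k, with the same edge rule. The color-preserving automorphisms of ω_k are exactly the maps determined by even-cardinality subsets S ⊆ [k] (swap a_i ↔ b_i for i ∈ S, and flip bits indexed by S on all string vertices), so ω_k has exactly 2^(k-1) automorphisms. -/

import Mathlib

/-- Hamming weight of a k-bit string. -/
def bitWeight {k : ℕ} (b : Fin k → Bool) : ℕ :=
  (Finset.univ.filter (fun i => b i = true)).card

/-- Vertices of the extended CFI block ω_k: one vertex for every k-bit string, plus the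
bit vertices a_i = (i, false) and b_i = (i, true). -/
def OmegaVert (k : ℕ) : Type :=
  (Fin k → Bool) ⊕ (Fin k × Bool)

/-- Adjacency of ω_k: x_b is adjacent to a_i iff bit i of b is 0, to b_i iff bit i is 1. -/
def omegaAdj {k : ℕ} : OmegaVert k → OmegaVert k → Prop
  | Sum.inl b, Sum.inr p => b p.1 = p.2
  | Sum.inr p, Sum.inl b => b p.1 = p.2
  | _, _ => False

/-- Colors of ω_k: string vertices are colored by their weight parity (c_e / c_o),
and the pair {a_i, b_i} has color i. -/
def omegaColor {k : ℕ} : OmegaVert k → Bool ⊕ Fin k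
  | Sum.inl b => Sum.inl (decide (Even (bitWeight b)))
  | Sum.inr p => Sum.inr p.1

/-- Flip the bits indexed by S. -/
def flipS {k : ℕ} (S : Finset (Fin k)) (b : Fin k → Bool) : Fin k → Bool :=
  fun i => if i ∈ S then !(b i) else b i

/-!
A colour-preserving automorphism maps string vertices to string vertices and each pair
`{a_i, b_i}` to itself, so it is determined by the image `c` of the all-zero string:
adjacency forces the pair `i` to be swapped iff `c i = true`, and then every string `b` to be
sent to `b` with the bits of `c` flipped. The all-zero string has colour `c_e`, so `c` has even weight; conversely,
flipping an even set of bits preserves the parity of the weight. Finally, even subsets are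
half of all subsets of a nonempty set because `∑_T (-1)^|T| = 0`.
-/

open Finset

lemma card_filter_even_card_powerset {α : Type*} {s : Finset α} (hs : s.Nonempty) :
    #{t ∈ s.powerset | Even #t} = 2 ^ (#s - 1) := by
  set E := #{t ∈ s.powerset | Even #t}
  set O := #{t ∈ s.powerset | ¬Even #t}
  have htotal : E + O = 2 ^ #s := by
    rw [card_filter_add_card_filter_not, card_powerset]
  have hbalance : (E : ℤ) - O = 0 := by
    rw [← sum_powerset_neg_one_pow_card_of_nonempty hs,
      ← sum_filter_add_sum_filter_not _ (Even #·),
      sum_congr rfl fun t ht => (mem_filter.1 ht).2.neg_one_pow,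
      sum_congr rfl fun t ht => (Nat.not_even_iff_odd.1 (mem_filter.1 ht).2).neg_one_pow]
    simp [E, O, sub_eq_add_neg]
  have hpow : 2 ^ #s = 2 * 2 ^ (#s - 1) := by
    rw [← pow_succ', Nat.sub_add_cancel hs.card_pos]
  omega

lemma natCard_even_card_finset (α : Type*) [Fintype α] :
    Nat.card {s : Finset α // Even #s} = 2 ^ (Fintype.card α - 1) := by
  rw [Nat.card_eq_fintype_card, Fintype.card_subtype, ← powerset_univ]
  rcases isEmpty_or_nonempty α with hα | hα
  · simp [filter_singleton]
  · rw [card_filter_even_card_powerset univ_nonempty, card_univ]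

section

variable {k : ℕ}

lemma bitWeight_flipS_cast (S : Finset (Fin k)) (b : Fin k → Bool) :
    (bitWeight (flipS S b) : ZMod 2) = bitWeight b + #S := by
  have hS : (#S : ZMod 2) = ∑ i, if i ∈ S then 1 else 0 := by simp
  simp only [bitWeight, natCast_card_filter, hS, ← sum_add_distrib]
  refine sum_congr rfl fun i _ => ?_
  simp only [flipS]
  by_cases hi : i ∈ S <;> rcases Bool.eq_false_or_eq_true (b i) with hb | hb <;>
    simp [hi, hb, CharTwo.add_self_eq_zero]

lemma even_bitWeight_flipS_iff (S : Finset (Fin k)) (b : Fin k → Bool) :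
    Even (bitWeight (flipS S b)) ↔ (Even (bitWeight b) ↔ Even #S) := by
  simp only [← ZMod.natCast_eq_zero_iff_even, bitWeight_flipS_cast]
  generalize (bitWeight b : ZMod 2) = x
  generalize (#S : ZMod 2) = y
  revert x y
  decide

lemma flipS_involutive (S : Finset (Fin k)) : Function.Involutive (flipS S) := by
  intro b
  funext i
  by_cases hi : i ∈ S <;> simp [flipS, hi]

def flipPair (S : Finset (Fin k)) (p : Fin k × Bool) : Fin k × Bool :=
  (p.1, if p.1 ∈ S then !p.2 else p.2)

lemma flipPair_involutive (S : Finset (Fin k)) : Function.Involutive (flipPair S) := by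
  rintro ⟨i, t⟩
  by_cases hi : i ∈ S <;> simp [flipPair, hi]

def IsOmegaAut (π : Equiv.Perm (OmegaVert k)) : Prop :=
  (∀ x y, omegaAdj (π x) (π y) ↔ omegaAdj x y) ∧ ∀ x, omegaColor (π x) = omegaColor x

def omegaPerm (S : Finset (Fin k)) : Equiv.Perm (OmegaVert k) :=
  Equiv.sumCongr (flipS_involutive S).toPerm (flipPair_involutive S).toPerm

@[simp]
lemma omegaPerm_inl (S : Finset (Fin k)) (b : Fin k → Bool) :
    omegaPerm S (Sum.inl b) = Sum.inl (flipS S b) := rfl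

@[simp]
lemma omegaPerm_inr (S : Finset (Fin k)) (p : Fin k × Bool) :
    omegaPerm S (Sum.inr p) = Sum.inr (flipPair S p) := rfl

lemma eq_omegaPerm_iff (π : Equiv.Perm (OmegaVert k)) (S : Finset (Fin k)) :
    π = omegaPerm S ↔ (∀ b, π (Sum.inl b) = Sum.inl (flipS S b)) ∧
      ∀ i t, π (Sum.inr (i, t)) = Sum.inr (i, if i ∈ S then !t else t) := by
  constructor
  · rintro rfl
    exact ⟨fun _ => rfl, fun _ _ => rfl⟩
  · rintro ⟨hinl, hinr⟩
    ext (b | ⟨i, t⟩)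
    · exact hinl b
    · exact hinr i t

lemma omegaPerm_injective : Function.Injective (omegaPerm : Finset (Fin k) → _) := by
  intro S S' h
  ext i
  have := Sum.inr_injective congr($h (Sum.inr (i, false)))
  simpa [flipPair] using this

lemma isOmegaAut_omegaPerm {S : Finset (Fin k)} (hS : Even #S) :
    IsOmegaAut (omegaPerm S) := by
  constructor
  · rintro (b | ⟨i, t⟩) (b' | ⟨j, t'⟩) <;>
      simp only [omegaPerm_inl, omegaPerm_inr, omegaAdj, flipS, flipPair] <;> split_ifs <;> simp
  · rintro (b | p)
    · simp [omegaColor, even_bitWeight_flipS_iff, hS]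
    · rfl

lemma exists_eq_inl_of_omegaColor_eq {y : OmegaVert k} {c : Bool}
    (h : omegaColor y = Sum.inl c) : ∃ b, y = Sum.inl b := by
  rcases y with b | p
  · exact ⟨b, rfl⟩
  · simp [omegaColor] at h

lemma exists_eq_inr_of_omegaColor_eq {y : OmegaVert k} {i : Fin k}
    (h : omegaColor y = Sum.inr i) : ∃ t, y = Sum.inr (i, t) := by
  rcases y with b | ⟨j, t⟩
  · simp [omegaColor] at h
  · obtain rfl : j = i := by simpa [omegaColor] using h
    exact ⟨t, rfl⟩

lemma IsOmegaAut.exists_eq_omegaPerm {π : Equiv.Perm (OmegaVert k)}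
    (hπ : IsOmegaAut π) : ∃ S, Even #S ∧ π = omegaPerm S := by
  obtain ⟨hadj, hcol⟩ := hπ
  choose f hf using fun b => exists_eq_inl_of_omegaColor_eq (hcol (Sum.inl b))
  choose g hg using fun i t => exists_eq_inr_of_omegaColor_eq (hcol (Sum.inr (i, t)))
  have hfg : ∀ b i t, f b i = g i t ↔ b i = t := fun b i t => by
    simpa [hf, hg, omegaAdj] using hadj (Sum.inl b) (Sum.inr (i, t))
  set S : Finset (Fin k) := {i | f (fun _ => false) i = true}
  have hg_eq : ∀ i t, g i t = if i ∈ S then !t else t := by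
    intro i t
    have h0 := hfg (fun _ => false) i t
    simp only [S, mem_filter, mem_univ, true_and]
    generalize f (fun _ => false) i = c at h0 ⊢
    generalize g i t = s at h0 ⊢
    cases c <;> cases s <;> cases t <;> simp_all
  have hf_eq : ∀ b, f b = flipS S b := fun b =>
    funext fun i => ((hfg b i (b i)).2 rfl).trans (hg_eq i (b i))
  have hπS : π = omegaPerm S :=
    (eq_omegaPerm_iff π S).2 ⟨fun b => by rw [hf, hf_eq], fun i t => by rw [hg, hg_eq]⟩
  refine ⟨S, ?_, hπS⟩
  have hcol0 := hcol (Sum.inl fun _ => false)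
  rw [hπS, omegaPerm_inl] at hcol0
  simp only [omegaColor, Sum.inl.injEq, decide_eq_decide, even_bitWeight_flipS_iff] at hcol0
  have hzero : bitWeight (fun _ : Fin k => false) = 0 := by simp [bitWeight]
  simpa [hzero] using hcol0

lemma isOmegaAut_iff_exists_eq_omegaPerm (π : Equiv.Perm (OmegaVert k)) :
    IsOmegaAut π ↔ ∃ S, Even #S ∧ π = omegaPerm S :=
  ⟨IsOmegaAut.exists_eq_omegaPerm, by rintro ⟨S, hS, rfl⟩; exact isOmegaAut_omegaPerm hS⟩

noncomputable def evenFinsetEquivOmegaAut :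
    {S : Finset (Fin k) // Even #S} ≃ {π : Equiv.Perm (OmegaVert k) // IsOmegaAut π} :=
  Equiv.ofBijective (fun S => ⟨omegaPerm S, isOmegaAut_omegaPerm S.2⟩)
    ⟨fun S S' h => Subtype.ext (omegaPerm_injective (congr_arg Subtype.val h)),
      fun π => by
        obtain ⟨S, hS, hπ⟩ := π.2.exists_eq_omegaPerm
        exact ⟨⟨S, hS⟩, Subtype.ext hπ.symm⟩⟩

end

/-- The color-preserving automorphisms of ω_k are exactly the maps determined by
even-cardinality subsets S ⊆ [k] (swap a_i ↔ b_i for i ∈ S and flip the bits indexed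
by S on all string vertices); hence ω_k has exactly 2^(k-1) automorphisms. -/
theorem omega_block_automorphisms (k : ℕ) :
    (∀ π : Equiv.Perm (OmegaVert k),
      ((∀ x y, omegaAdj (π x) (π y) ↔ omegaAdj x y) ∧
        ∀ x, omegaColor (π x) = omegaColor x) ↔
      ∃ S : Finset (Fin k), Even S.card ∧
        (∀ b : Fin k → Bool, π (Sum.inl b) = Sum.inl (flipS S b)) ∧
        (∀ (i : Fin k) (t : Bool),
          π (Sum.inr (i, t)) = Sum.inr (i, if i ∈ S then !t else t))) ∧
    Nat.card {π : Equiv.Perm (OmegaVert k) //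
        (∀ x y, omegaAdj (π x) (π y) ↔ omegaAdj x y) ∧
        ∀ x, omegaColor (π x) = omegaColor x} = 2 ^ (k - 1) := by
  refine ⟨fun π => ?_, ?_⟩
  · simp only [← eq_omegaPerm_iff]
    exact isOmegaAut_iff_exists_eq_omegaPerm π
  · calc Nat.card {π // IsOmegaAut π}
        _ = Nat.card {S : Finset (Fin k) // Even #S} :=
          Nat.card_congr evenFinsetEquivOmegaAut.symm
        _ = 2 ^ (k - 1) := by rw [natCard_even_card_finset, Fintype.card_fin]
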